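/- Let pi be a permutation in S_d with exactly n inversions, where n < binomial(d,2). Then the partial permutohedron vector F_pi = sum over pi-admissible sigma in S_d of sign(sigma) * e_{a(pi) + id - sigma} is an eigenvector of the adjacency matrix of SR(d,n) with eigenvalue -n. -/

import Mathlib

open Finset

abbrev SRVert (d n : ℕ) : Type := {x : Fin d → ℕ // ∑ i, x i = n}

noncomputable instance SRVert.fintype (d n : ℕ) : Fintype (SRVert d n) :=
  Fintype.ofInjective
    (fun x : SRVert d n => fun i => (⟨x.1 i, by
      have h := Finset.single_le_sum (f := x.1)
        (fun j _ => Nat.zero_le (x.1 j)) (Finset.mem_univ i)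
      have h2 := x.2
      omega⟩ : Fin (n+1)))
    (fun x y h => Subtype.ext (funext fun i => congrArg Fin.val (congrFun h i)))

/-- The simplicial rook graph: two vertices are adjacent if they differ in
exactly two coordinates. -/
def SR (d n : ℕ) : SimpleGraph (SRVert d n) where
  Adj x y := (Finset.univ.filter fun i => x.1 i ≠ y.1 i).card = 2
  symm := by
    refine ⟨fun x y h => ?_⟩
    rw [show (Finset.univ.filter fun i => y.1 i ≠ x.1 i)
        = (Finset.univ.filter fun i => x.1 i ≠ y.1 i) by
      apply Finset.filter_congr; intro i _; simp [ne_comm]]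
    exact h
  loopless := by refine ⟨fun z h => ?_⟩; simp at h

instance (d n : ℕ) : DecidableRel (SR d n).Adj :=
  fun x y => inferInstanceAs (Decidable (_ = 2))


/-- The inversion word of a permutation: `a_i` is the number of `j > i`
with `π i > π j`. -/
def invWord (d : ℕ) (π : Equiv.Perm (Fin d)) : Fin d → ℕ :=
  fun i => (Finset.univ.filter fun j => i < j ∧ π j < π i).card

/-- The partial permutohedron vector `F_π = ∑ sign(σ) e_{x(σ)}`, the sum being
over `π`-admissible permutations `σ`, where `x(σ)_i = a_i + i - σ i`
(so that `v = x(σ)` iff `v_i + σ i = a_i + i` for all `i`). -/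
def Fvec (d n : ℕ) (π : Equiv.Perm (Fin d)) : SRVert d n → ℝ :=
  fun v => ∑ σ : Equiv.Perm (Fin d),
    if (∀ i, v.1 i + (σ i : ℕ) = invWord d π i + (i : ℕ))
    then ((Equiv.Perm.sign σ : ℤ) : ℝ) else 0


/-!
Put `b = a(π) + id`, so that `F_π(v)` is the signed count of the permutations `σ` with
`v + σ = b`. Exchanging the sums, `(A F_π)(v)` is the signed count of the `σ ≤ b` for which
`b - σ` is a neighbour of `v`.

If some `σ₀` has `v + σ₀ = b`, these `σ` are the `σ₀ * swap x y` with `x < y`, `σ₀ x ≤ b y` and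
`σ₀ y ≤ b x`, each of sign `-sign σ₀`. The pairs `x < y` failing this correspond to the ordered
pairs with `b y < σ₀ x`, of which there are `∑ (d - 1 - b y) = binom(d,2) - n`.

Otherwise the defect `b - v - σ` sums to zero and has exactly two nonzero entries, positive at
some `p` and negative at `o`. Let `q` be the position where `σ` takes the value `b p - v p`. Then
`q ∉ {p, o}` (for `q = o`, `σ * swap p o` would be an exact solution), and `σ * swap p q` is again
counted, now with defect positive at `q` and the value needed there sitting at `p`. This
sign-reversing involution makes the signed count vanish.
-/

open Equiv

namespace PartialPermutohedron

variable {d : ℕ}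

def Hits (b v : Fin d → ℕ) (σ : Perm (Fin d)) : Prop :=
  ∀ k, v k + (σ k : ℕ) = b k

instance (b v : Fin d → ℕ) (σ : Perm (Fin d)) : Decidable (Hits b v σ) :=
  inferInstanceAs (Decidable (∀ k, v k + (σ k : ℕ) = b k))

/-- The lattice point `b - σ` is a neighbour of `v` in the simplicial rook graph. -/
def HitsNeighbor (b v : Fin d → ℕ) (σ : Perm (Fin d)) : Prop :=
  (∀ k, (σ k : ℕ) ≤ b k) ∧ #{k | v k + (σ k : ℕ) ≠ b k} = 2

instance (b v : Fin d → ℕ) (σ : Perm (Fin d)) : Decidable (HitsNeighbor b v σ) :=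
  inferInstanceAs (Decidable (_ ∧ _))

variable {b v : Fin d → ℕ} {σ σ₀ τ : Perm (Fin d)}

lemma Hits.le (h : Hits b v σ) (k : Fin d) : (σ k : ℕ) ≤ b k := by
  have := h k; omega

lemma Hits.unique (hσ : Hits b v σ) (hτ : Hits b v τ) : σ = τ :=
  Equiv.ext fun k => Fin.ext (by have := hσ k; have := hτ k; omega)

lemma Hits.sum_eq (h : Hits b v σ) : ∑ k, b k = ∑ k, v k + ∑ k : Fin d, (k : ℕ) := by
  rw [← Equiv.sum_comp σ (fun k : Fin d => (k : ℕ)), ← Finset.sum_add_distrib]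
  exact Finset.sum_congr rfl fun k _ => (h k).symm

lemma sum_sign_hits (h₀ : Hits b v σ₀) :
    ∑ σ, (if Hits b v σ then ((Perm.sign σ : ℤ) : ℝ) else 0) = Perm.sign σ₀ := by
  rw [Fintype.sum_eq_single σ₀ fun σ hσ => if_neg fun h => hσ (h.unique h₀), if_pos h₀]

lemma hitsNeighbor_iff_of_hits (h₀ : Hits b v σ₀) :
    HitsNeighbor b v σ ↔ ∃ x y, x < y ∧ (σ₀ x : ℕ) ≤ b y ∧ (σ₀ y : ℕ) ≤ b x ∧
      σ₀ * swap x y = σ := by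
  have hsupport : ({k | v k + (σ k : ℕ) ≠ b k} : Finset (Fin d)) = (σ₀⁻¹ * σ).support := by
    ext k
    simp only [Finset.mem_filter, Finset.mem_univ, true_and, Perm.mem_support, Perm.mul_apply,
      Ne, Perm.inv_eq_iff_eq]
    rw [← h₀ k, add_right_inj, Fin.val_inj]
  have hle_swap : ∀ x y, (∀ k, ((σ₀ * swap x y) k : ℕ) ≤ b k) ↔
      (σ₀ y : ℕ) ≤ b x ∧ (σ₀ x : ℕ) ≤ b y := by
    intro x y
    refine ⟨fun h => ⟨by simpa using h x, by simpa using h y⟩, fun ⟨hx, hy⟩ k => ?_⟩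
    rw [Perm.mul_apply, swap_apply_def]
    split_ifs with hkx hky
    · exact hkx ▸ hx
    · exact hky ▸ hy
    · exact h₀.le k
  rw [HitsNeighbor, hsupport, Perm.card_support_eq_two]
  constructor
  · rintro ⟨hle, x, y, hxy, hswap⟩
    rw [inv_mul_eq_iff_eq_mul] at hswap
    subst hswap
    obtain ⟨hx, hy⟩ := (hle_swap x y).1 hle
    rcases hxy.lt_or_gt with hlt | hlt
    · exact ⟨x, y, hlt, hy, hx, rfl⟩
    · exact ⟨y, x, hlt, hx, hy, by rw [swap_comm]⟩
  · rintro ⟨x, y, hlt, hx, hy, rfl⟩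
    exact ⟨(hle_swap x y).2 ⟨hy, hx⟩, x, y, hlt.ne, by rw [inv_mul_cancel_left]⟩

lemma swap_injOn_lt :
    Set.InjOn (fun p : Fin d × Fin d => swap p.1 p.2) {p | p.1 < p.2} := by
  rintro ⟨x, y⟩ (hxy : x < y) ⟨x', y'⟩ (hxy' : x' < y') (h : swap x y = swap x' y')
  have hx := congrArg (· x) h
  have hy := congrArg (· y) h
  simp only [swap_apply_left, swap_apply_right, swap_apply_def] at hx hy
  ext <;> split_ifs at hx hy <;> grind

lemma card_filter_lt_val (c : ℕ) (hc : c < d) : #{m : Fin d | c < (m : ℕ)} = d - 1 - c := by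
  have hsplit := Finset.card_filter_add_card_filter_not (s := Finset.univ)
    (fun m : Fin d => (m : ℕ) < c + 1)
  simp only [Fin.card_filter_val_lt, not_lt, Finset.card_univ, Fintype.card_fin,
    Nat.succ_le_iff] at hsplit
  omega

lemma sum_sum_ite_lt :
    ∑ x : Fin d, ∑ y : Fin d, (if x < y then 1 else 0) = ∑ k : Fin d, (k : ℕ) := by
  rw [Finset.sum_comm]
  refine Finset.sum_congr rfl fun y _ => ?_
  rw [← Finset.card_filter, Finset.filter_gt_eq_Iio, Fin.card_Iio]

lemma sum_sum_ite_lt_apply_add_sum (hb : ∀ k, b k < d) :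
    ∑ x, ∑ y, (if b y < (σ₀ x : ℕ) then 1 else 0) + ∑ k, b k = (∑ k : Fin d, (k : ℕ)) * 2 := by
  have hcount : ∀ y, ∑ x, (if b y < (σ₀ x : ℕ) then 1 else 0) + b y = d - 1 := fun y => by
    rw [Equiv.sum_comp σ₀ (fun m : Fin d => if b y < (m : ℕ) then 1 else 0),
      ← Finset.card_filter, card_filter_lt_val _ (hb y)]
    have := hb y
    omega
  rw [Finset.sum_comm, ← Finset.sum_add_distrib, Finset.sum_congr rfl fun y _ => hcount y,
    Finset.sum_const, Finset.card_univ, Fintype.card_fin, smul_eq_mul,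
    Fin.sum_univ_eq_sum_range (fun k => k), Finset.sum_range_id_mul_two]

lemma card_pairs_le_add_sum_val (hσ₀ : ∀ k, (σ₀ k : ℕ) ≤ b k) (hb : ∀ k, b k < d) :
    #{p : Fin d × Fin d | p.1 < p.2 ∧ (σ₀ p.1 : ℕ) ≤ b p.2 ∧ (σ₀ p.2 : ℕ) ≤ b p.1} +
      ∑ k : Fin d, (k : ℕ) = ∑ k, b k := by
  have hgood : #{p : Fin d × Fin d | p.1 < p.2 ∧ (σ₀ p.1 : ℕ) ≤ b p.2 ∧ (σ₀ p.2 : ℕ) ≤ b p.1} =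
      ∑ x, ∑ y, if x < y ∧ (σ₀ x : ℕ) ≤ b y ∧ (σ₀ y : ℕ) ≤ b x then 1 else 0 := by
    rw [Finset.card_filter, Fintype.sum_prod_type]
  -- a pair `x ≠ y` with `b y < σ₀ x` is either increasing or decreasing; flip the latter
  have hbad_split : ∑ x, ∑ y, (if b y < (σ₀ x : ℕ) then 1 else 0) =
      ∑ x, ∑ y, ((if x < y ∧ b y < (σ₀ x : ℕ) then 1 else 0) +
        (if x < y ∧ b x < (σ₀ y : ℕ) then 1 else 0)) := by
    simp only [Finset.sum_add_distrib]
    rw [Finset.sum_comm (f := fun x y => if x < y ∧ b x < (σ₀ y : ℕ) then 1 else 0),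
      ← Finset.sum_add_distrib]
    refine Finset.sum_congr rfl fun x _ => ?_
    rw [← Finset.sum_add_distrib]
    refine Finset.sum_congr rfl fun y _ => ?_
    have := hσ₀ x
    split_ifs <;> grind
  -- since `σ₀ ≤ b`, the conditions `b y < σ₀ x` and `b x < σ₀ y` exclude each other
  have htrichotomy : ∑ x, ∑ y, (if x < y ∧ (σ₀ x : ℕ) ≤ b y ∧ (σ₀ y : ℕ) ≤ b x then 1 else 0) +
      ∑ x, ∑ y, ((if x < y ∧ b y < (σ₀ x : ℕ) then 1 else 0) +
        (if x < y ∧ b x < (σ₀ y : ℕ) then 1 else 0)) =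
      ∑ x : Fin d, ∑ y : Fin d, (if x < y then 1 else 0) := by
    rw [← Finset.sum_add_distrib]
    refine Finset.sum_congr rfl fun x _ => ?_
    rw [← Finset.sum_add_distrib]
    refine Finset.sum_congr rfl fun y _ => ?_
    have := hσ₀ x
    have := hσ₀ y
    split_ifs <;> omega
  have := sum_sum_ite_lt_apply_add_sum (σ₀ := σ₀) hb
  rw [sum_sum_ite_lt] at htrichotomy
  omega

lemma sum_sign_hitsNeighbor_of_hits (hb : ∀ k, b k < d) (h₀ : Hits b v σ₀) :
    ∑ σ, (if HitsNeighbor b v σ then ((Perm.sign σ : ℤ) : ℝ) else 0) =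
      -((∑ k, v k : ℕ) : ℝ) * Perm.sign σ₀ := by
  set G : Finset (Fin d × Fin d) :=
    {p | p.1 < p.2 ∧ (σ₀ p.1 : ℕ) ≤ b p.2 ∧ (σ₀ p.2 : ℕ) ≤ b p.1}
  have himage : ({σ | HitsNeighbor b v σ} : Finset (Perm (Fin d))) =
      G.image fun p => σ₀ * swap p.1 p.2 := by
    ext σ
    simp [G, hitsNeighbor_iff_of_hits h₀, and_assoc]
  have hinj : Set.InjOn (fun p : Fin d × Fin d => σ₀ * swap p.1 p.2) G :=
    fun p hp q hq h => swap_injOn_lt (Finset.mem_filter.1 hp).2.1 (Finset.mem_filter.1 hq).2.1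
      (mul_left_cancel h)
  have hsign : ∀ p ∈ G, ((Perm.sign (σ₀ * swap p.1 p.2) : ℤ) : ℝ) = -Perm.sign σ₀ := by
    intro p hp
    rw [Perm.sign_mul, Perm.sign_swap (Finset.mem_filter.1 hp).2.1.ne]
    push_cast
    ring
  have hcard : #G = ∑ k, v k :=
    Nat.add_right_cancel ((card_pairs_le_add_sum_val h₀.le hb).trans h₀.sum_eq)
  rw [← Finset.sum_filter, himage, Finset.sum_image hinj, Finset.sum_congr rfl hsign,
    Finset.sum_const, hcard, nsmul_eq_mul, neg_mul_comm]

def defect (b v : Fin d → ℕ) (σ : Perm (Fin d)) (k : Fin d) : ℤ :=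
  b k - v k - (σ k : ℕ)

lemma defect_ne_zero_iff {k : Fin d} : defect b v σ k ≠ 0 ↔ v k + (σ k : ℕ) ≠ b k := by
  unfold defect
  omega

/-- At `p` the permutation `σ` falls short of `b - v`, and `q` is where `σ` takes the value
needed at `p`; swapping `p` and `q` is the sign-reversing involution. -/
def IsFlip (b v : Fin d → ℕ) (σ : Perm (Fin d)) (p q : Fin d) : Prop :=
  0 < defect b v σ p ∧ ((σ q : ℕ) : ℤ) = b p - v p

section

variable (hsum : ∑ k, b k = ∑ k, v k + ∑ k : Fin d, (k : ℕ))
include hsum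

lemma sum_defect_eq_zero : ∑ k, defect b v σ k = 0 := by
  have hsumℤ := congrArg (Nat.cast : ℕ → ℤ) hsum
  push_cast at hsumℤ
  simp only [defect, Finset.sum_sub_distrib, Equiv.sum_comp σ (fun k : Fin d => ((k : ℕ) : ℤ))]
  linarith

lemma HitsNeighbor.exists_defect_pos (h : HitsNeighbor b v σ) :
    ∃ p o, p ≠ o ∧ 0 < defect b v σ p ∧ defect b v σ o = -defect b v σ p ∧
      ∀ k, k ≠ p → k ≠ o → v k + (σ k : ℕ) = b k := by
  obtain ⟨x, y, hxy, hxy_eq⟩ := Finset.card_eq_two.1 h.2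
  have hsupp : ∀ k, defect b v σ k ≠ 0 ↔ k = x ∨ k = y := fun k => by
    simpa [defect_ne_zero_iff] using Finset.ext_iff.1 hxy_eq k
  have hrest : ∀ k, k ≠ x → k ≠ y → v k + (σ k : ℕ) = b k := fun k hkx hky =>
    not_not.1 fun hne => ((hsupp k).1 (defect_ne_zero_iff.2 hne)).elim hkx hky
  have hzero := sum_defect_eq_zero hsum (σ := σ)
  rw [Fintype.sum_eq_add x y hxy fun k hk => not_not.1 fun hne => by grind] at hzero
  rcases ((hsupp x).2 (Or.inl rfl)).lt_or_gt with hneg | hpos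
  · exact ⟨y, x, hxy.symm, by linarith, by linarith, fun k hky hkx => hrest k hkx hky⟩
  · exact ⟨x, y, hxy, hpos, by linarith, hrest⟩

lemma HitsNeighbor.eq_of_defect_pos (h : HitsNeighbor b v σ) {p p' : Fin d}
    (hp : 0 < defect b v σ p) (hp' : 0 < defect b v σ p') : p = p' := by
  obtain ⟨p₀, o, -, hp₀, ho, hrest⟩ := h.exists_defect_pos hsum
  have hpos : ∀ k, 0 < defect b v σ k → k = p₀ := fun k hk => by
    by_contra hkp
    by_cases hko : k = o
    · subst hko
      linarith
    · have := hrest k hkp hko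
      unfold defect at hk
      omega
  rw [hpos p hp, hpos p' hp']

lemma HitsNeighbor.exists_isFlip (hb : ∀ k, b k < d) (h : HitsNeighbor b v σ) :
    ∃ p q, IsFlip b v σ p q := by
  obtain ⟨p, -, -, hp, -⟩ := h.exists_defect_pos hsum
  have hlt : b p - v p < d := by have := hb p; omega
  refine ⟨p, σ.symm ⟨b p - v p, hlt⟩, hp, ?_⟩
  unfold defect at hp
  simp only [Equiv.apply_symm_apply]
  omega

lemma IsFlip.unique (h : HitsNeighbor b v σ) {p q p' q' : Fin d} (hf : IsFlip b v σ p q)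
    (hf' : IsFlip b v σ p' q') : p = p' ∧ q = q' := by
  obtain rfl := h.eq_of_defect_pos hsum hf.1 hf'.1
  exact ⟨rfl, σ.injective (Fin.ext (by have := hf.2; have := hf'.2; omega))⟩

/-- If `q` were the other defective coordinate, `σ * swap p q` would be an exact solution. -/
lemma IsFlip.ne_and_exact_at_right (hno : ∀ τ, ¬ Hits b v τ) (h : HitsNeighbor b v σ)
    {p q : Fin d} (hf : IsFlip b v σ p q) : p ≠ q ∧ v q + (σ q : ℕ) = b q := by
  obtain ⟨p₀, o, -, hp₀, ho, hrest⟩ := h.exists_defect_pos hsum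
  obtain rfl := h.eq_of_defect_pos hsum hp₀ hf.1
  obtain ⟨hp, hq⟩ := hf
  unfold defect at hp ho
  have hpq : p₀ ≠ q := by rintro rfl; omega
  refine ⟨hpq, hrest q hpq.symm fun hqo => hno (σ * swap p₀ q) fun k => ?_⟩
  subst hqo
  rw [Perm.mul_apply, swap_apply_def]
  split_ifs with hkp hkq
  · subst hkp; omega
  · subst hkq; omega
  · exact hrest k hkp hkq

lemma IsFlip.mul_swap (hno : ∀ τ, ¬ Hits b v τ) (h : HitsNeighbor b v σ) {p q : Fin d}
    (hf : IsFlip b v σ p q) :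
    p ≠ q ∧ HitsNeighbor b v (σ * swap p q) ∧ IsFlip b v (σ * swap p q) q p := by
  obtain ⟨hpq, hqfix⟩ := hf.ne_and_exact_at_right hsum hno h
  obtain ⟨p₀, o, hpo, hp₀, ho, hrest⟩ := h.exists_defect_pos hsum
  obtain rfl := h.eq_of_defect_pos hsum hp₀ hf.1
  obtain ⟨hp, hq⟩ := hf
  unfold defect at hp ho
  have hqo : q ≠ o := by rintro rfl; omega
  refine ⟨hpq, ⟨fun k => ?_, Finset.card_eq_two.2 ⟨q, o, hqo, ?_⟩⟩, ?_, ?_⟩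
  · rw [Perm.mul_apply, swap_apply_def]
    have := h.1 k
    split_ifs with hkp hkq
    · subst hkp; omega
    · subst hkq; omega
    · exact this
  · ext k
    rw [Finset.mem_filter_univ]
    simp only [Finset.mem_insert, Finset.mem_singleton, Perm.mul_apply, swap_apply_def]
    split_ifs with hkp hkq
    · subst hkp; simp only [hpq, hpo, or_self, iff_false, not_not]; omega
    · subst hkq; simp only [true_or, iff_true]; omega
    · simp only [hkq, false_or]
      exact ⟨fun hne => by_contra fun hko => hne (hrest k hkp hko), fun hko => by subst hko; omega⟩
  · unfold defect
    simp only [Perm.mul_apply, swap_apply_right]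
    omega
  · simp only [Perm.mul_apply, swap_apply_left]
    omega

end

lemma sum_sign_hitsNeighbor_eq_zero (hb : ∀ k, b k < d)
    (hsum : ∑ k, b k = ∑ k, v k + ∑ k : Fin d, (k : ℕ)) (hno : ∀ τ, ¬ Hits b v τ) :
    ∑ σ, (if HitsNeighbor b v σ then ((Perm.sign σ : ℤ) : ℝ) else 0) = 0 := by
  rw [← Finset.sum_filter]
  have hflip : ∀ σ ∈ ({σ | HitsNeighbor b v σ} : Finset (Perm (Fin d))),
      ∃ p q, IsFlip b v σ p q :=
    fun σ hσ => (Finset.mem_filter.1 hσ).2.exists_isFlip hsum hb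
  choose p q hpq using hflip
  have hswap : ∀ σ hσ, p σ hσ ≠ q σ hσ ∧ HitsNeighbor b v (σ * swap (p σ hσ) (q σ hσ)) ∧
      IsFlip b v (σ * swap (p σ hσ) (q σ hσ)) (q σ hσ) (p σ hσ) :=
    fun σ hσ => (hpq σ hσ).mul_swap hsum hno (Finset.mem_filter.1 hσ).2
  have hmem : ∀ σ hσ, σ * swap (p σ hσ) (q σ hσ) ∈
      ({σ | HitsNeighbor b v σ} : Finset (Perm (Fin d))) :=
    fun σ hσ => Finset.mem_filter.2 ⟨Finset.mem_univ _, (hswap σ hσ).2.1⟩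
  refine Finset.sum_involution (fun σ hσ => σ * swap (p σ hσ) (q σ hσ)) (fun σ hσ => ?_)
    (fun σ hσ _ heq => ?_) hmem (fun σ hσ => ?_)
  · rw [Perm.sign_mul, Perm.sign_swap (hswap σ hσ).1]
    push_cast
    ring
  · have := congrArg (· (p σ hσ)) heq
    simp only [Perm.mul_apply, swap_apply_left, EmbeddingLike.apply_eq_iff_eq] at this
    exact (hswap σ hσ).1 this.symm
  · obtain ⟨hp', hq'⟩ := IsFlip.unique hsum (hswap σ hσ).2.1 (hpq _ (hmem σ hσ)) (hswap σ hσ).2.2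
    simp only [hp', hq', swap_comm (q σ hσ), mul_assoc, swap_mul_self, mul_one]

lemma sum_sign_hitsNeighbor (hb : ∀ k, b k < d)
    (hsum : ∑ k, b k = ∑ k, v k + ∑ k : Fin d, (k : ℕ)) :
    ∑ σ, (if HitsNeighbor b v σ then ((Perm.sign σ : ℤ) : ℝ) else 0) =
      -((∑ k, v k : ℕ) : ℝ) * ∑ σ, (if Hits b v σ then ((Perm.sign σ : ℤ) : ℝ) else 0) := by
  by_cases hex : ∃ σ₀, Hits b v σ₀
  · obtain ⟨σ₀, h₀⟩ := hex
    rw [sum_sign_hitsNeighbor_of_hits hb h₀, sum_sign_hits h₀]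
  · rw [not_exists] at hex
    rw [sum_sign_hitsNeighbor_eq_zero hb hsum hex,
      Finset.sum_eq_zero fun σ _ => if_neg (hex σ), mul_zero]

def signedVec (b : Fin d → ℕ) (n : ℕ) : SRVert d n → ℝ :=
  fun w => ∑ σ : Perm (Fin d), if Hits b w.1 σ then ((Perm.sign σ : ℤ) : ℝ) else 0

variable {n : ℕ}

lemma Hits.adj_iff {v w : SRVert d n} (hw : Hits b w.1 σ) :
    (SR d n).Adj v w ↔ #{k | v.1 k + (σ k : ℕ) ≠ b k} = 2 := by
  have hcoord : ∀ k, v.1 k ≠ w.1 k ↔ v.1 k + (σ k : ℕ) ≠ b k := fun k => by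
    have := hw k
    omega
  change #{k | v.1 k ≠ w.1 k} = 2 ↔ _
  simp only [hcoord]

lemma sum_neighborFinset_ite_hits (hsum : ∑ k, b k = n + ∑ k : Fin d, (k : ℕ))
    (v : SRVert d n) (σ : Perm (Fin d)) :
    ∑ w ∈ (SR d n).neighborFinset v, (if Hits b w.1 σ then ((Perm.sign σ : ℤ) : ℝ) else 0) =
      if HitsNeighbor b v.1 σ then ((Perm.sign σ : ℤ) : ℝ) else 0 := by
  by_cases hN : HitsNeighbor b v.1 σ
  · have hw₀ : ∑ k, (b k - (σ k : ℕ)) = n := by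
      rw [Finset.sum_tsub_distrib _ fun k _ => hN.1 k,
        Equiv.sum_comp σ (fun k : Fin d => (k : ℕ)), hsum, Nat.add_sub_cancel]
    let w₀ : SRVert d n := ⟨fun k => b k - σ k, hw₀⟩
    have hits₀ : Hits b w₀.1 σ := fun k => Nat.sub_add_cancel (hN.1 k)
    have hunique : ∀ w : SRVert d n, Hits b w.1 σ → w = w₀ := fun w hw =>
      Subtype.ext (funext fun k => by have := hw k; have := hits₀ k; omega)
    rw [Finset.sum_eq_single_of_mem w₀ ?_ fun w _ hne => if_neg fun hw => hne (hunique w hw),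
      if_pos hits₀, if_pos hN]
    rw [SimpleGraph.mem_neighborFinset, hits₀.adj_iff]
    exact hN.2
  · rw [if_neg hN]
    refine Finset.sum_eq_zero fun w hw => if_neg fun hits => hN ⟨hits.le, ?_⟩
    rwa [SimpleGraph.mem_neighborFinset, hits.adj_iff] at hw

lemma adjMatrix_mulVec_signedVec_apply (hsum : ∑ k, b k = n + ∑ k : Fin d, (k : ℕ))
    (v : SRVert d n) :
    ((SR d n).adjMatrix ℝ).mulVec (signedVec b n) v =
      ∑ σ, if HitsNeighbor b v.1 σ then ((Perm.sign σ : ℤ) : ℝ) else 0 := by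
  rw [SimpleGraph.adjMatrix_mulVec_apply]
  simp only [signedVec]
  rw [Finset.sum_comm]
  exact Finset.sum_congr rfl fun σ _ => sum_neighborFinset_ite_hits hsum v σ

theorem adjMatrix_mulVec_signedVec (hb : ∀ k, b k < d)
    (hsum : ∑ k, b k = n + ∑ k : Fin d, (k : ℕ)) :
    ((SR d n).adjMatrix ℝ).mulVec (signedVec b n) = (-(n : ℝ)) • signedVec b n := by
  funext v
  rw [adjMatrix_mulVec_signedVec_apply hsum, Pi.smul_apply, smul_eq_mul]
  have h := sum_sign_hitsNeighbor hb (v := v.1) (by rw [hsum, v.2])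
  rwa [v.2] at h

lemma invWord_add_lt (π : Perm (Fin d)) (k : Fin d) : invWord d π k + k < d := by
  have hle : invWord d π k ≤ #{j | k < j} :=
    Finset.card_le_card fun j => by simp +contextual
  rw [Finset.filter_lt_eq_Ioi, Fin.card_Ioi] at hle
  omega

end PartialPermutohedron

open PartialPermutohedron

theorem partial_permutohedron_eigenvector_general (d n : ℕ) (π : Equiv.Perm (Fin d))
    (hπ : ∑ i, invWord d π i = n) :
    Fvec d n π ≠ 0 ∧
    ((SR d n).adjMatrix ℝ).mulVec (Fvec d n π) = (-(n : ℝ)) • Fvec d n π := by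
  have hF : Fvec d n π = signedVec (fun i => invWord d π i + i) n := rfl
  have hsum : ∑ i, (invWord d π i + (i : ℕ)) = n + ∑ i : Fin d, (i : ℕ) := by
    rw [Finset.sum_add_distrib, hπ]
  refine ⟨fun hzero => ?_, hF ▸ adjMatrix_mulVec_signedVec (invWord_add_lt π) hsum⟩
  have hone : Fvec d n π ⟨invWord d π, hπ⟩ = 1 :=
    (sum_sign_hits (b := fun i => invWord d π i + i) (σ₀ := 1) fun _ => rfl).trans (by simp)
  simp [hzero] at hone

/-- for `π ∈ S_d` with exactly `n < binom(d,2)` inversions, the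
partial permutohedron vector `F_π` is an eigenvector of the adjacency matrix of
`SR(d,n)` with eigenvalue `-n`. -/
theorem partial_permutohedron_eigenvector (d n : ℕ) (π : Equiv.Perm (Fin d))
    (hπ : ∑ i, invWord d π i = n) (hn : n < d.choose 2) :
    Fvec d n π ≠ 0 ∧
    ((SR d n).adjMatrix ℝ).mulVec (Fvec d n π) = (-(n : ℝ)) • Fvec d n π :=
  partial_permutohedron_eigenvector_general d n π hπ
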